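/- If both independence (I(R;A)=0) and separation (I(R;A|Y)=0) are exactly satisfied, then the sufficiency gap equals the legacy term: I(Y;A|R) = I(A;Y). In particular, if additionally A and Y are not independent, sufficiency is violated. -/
import Mathlib


open Finset

open scoped Classical

/-- probability of an event under a pmf on a finite sample space -/
noncomputable def pr {Ω : Type*} [Fintype Ω] (p : Ω → ℝ) (E : Ω → Prop) : ℝ :=
  ∑ ω, if E ω then p ω else 0

/-- `p` is a probability mass function -/
def IsPMF {Ω : Type*} [Fintype Ω] (p : Ω → ℝ) : Prop :=
  (∀ ω, 0 ≤ p ω) ∧ ∑ ω, p ω = 1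

/-- mutual information I(X;Y) of finitely supported discrete random variables -/
noncomputable def mutualInfo {Ω : Type*} [Fintype Ω] {S T : Type*} [Fintype S] [Fintype T]
    (p : Ω → ℝ) (X : Ω → S) (Y : Ω → T) : ℝ :=
  ∑ x : S, ∑ y : T,
    pr p (fun ω => X ω = x ∧ Y ω = y) *
      Real.log (pr p (fun ω => X ω = x ∧ Y ω = y) /
        (pr p (fun ω => X ω = x) * pr p (fun ω => Y ω = y)))

/-- conditional mutual information I(X;Y∣Z) -/
noncomputable def condMutualInfo {Ω : Type*} [Fintype Ω] {S T U : Type*}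
    [Fintype S] [Fintype T] [Fintype U]
    (p : Ω → ℝ) (X : Ω → S) (Y : Ω → T) (Z : Ω → U) : ℝ :=
  ∑ x : S, ∑ y : T, ∑ z : U,
    pr p (fun ω => X ω = x ∧ Y ω = y ∧ Z ω = z) *
      Real.log ((pr p (fun ω => Z ω = z) *
          pr p (fun ω => X ω = x ∧ Y ω = y ∧ Z ω = z)) /
        (pr p (fun ω => X ω = x ∧ Z ω = z) * pr p (fun ω => Y ω = y ∧ Z ω = z)))

/-- Shannon entropy H(X) -/
noncomputable def entropy {Ω : Type*} [Fintype Ω] {S : Type*} [Fintype S]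
    (p : Ω → ℝ) (X : Ω → S) : ℝ :=
  - ∑ x : S, pr p (fun ω => X ω = x) * Real.log (pr p (fun ω => X ω = x))

/-- conditional Shannon entropy H(X∣Z) -/
noncomputable def condEntropy {Ω : Type*} [Fintype Ω] {S U : Type*} [Fintype S] [Fintype U]
    (p : Ω → ℝ) (X : Ω → S) (Z : Ω → U) : ℝ :=
  - ∑ x : S, ∑ z : U,
      pr p (fun ω => X ω = x ∧ Z ω = z) *
        Real.log (pr p (fun ω => X ω = x ∧ Z ω = z) / pr p (fun ω => Z ω = z))

section Aux

variable {Ω : Type*} [Fintype Ω]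

lemma pr_congr (p : Ω → ℝ) {E F : Ω → Prop} (h : ∀ ω, E ω ↔ F ω) : pr p E = pr p F := by
  unfold pr
  refine Finset.sum_congr rfl fun ω _ => ?_
  simp [h ω]

lemma pr_nonneg {p : Ω → ℝ} (hp : ∀ ω, 0 ≤ p ω) (E : Ω → Prop) : 0 ≤ pr p E := by
  refine Finset.sum_nonneg fun ω _ => ?_
  split
  · exact hp ω
  · exact le_refl 0

lemma pr_mono {p : Ω → ℝ} (hp : ∀ ω, 0 ≤ p ω) {E F : Ω → Prop} (h : ∀ ω, E ω → F ω) :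
    pr p E ≤ pr p F := by
  refine Finset.sum_le_sum fun ω _ => ?_
  by_cases hE : E ω
  · simp [hE, h ω hE]
  · simp only [hE, if_false]
    split
    · exact hp ω
    · exact le_refl 0

lemma pr_decomp {U : Type*} [Fintype U] (p : Ω → ℝ) (Z : Ω → U) (E : Ω → Prop) :
    pr p E = ∑ z : U, pr p (fun ω => E ω ∧ Z ω = z) := by
  unfold pr
  rw [Finset.sum_comm]
  refine Finset.sum_congr rfl fun ω _ => ?_
  by_cases hE : E ω <;> simp [hE]

lemma log_split4 {a b c d : ℝ} (ha : a ≠ 0) (hb : b ≠ 0) (hc : c ≠ 0) (hd : d ≠ 0) :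
    Real.log (a * b / (c * d)) = Real.log a + Real.log b - Real.log c - Real.log d := by
  rw [Real.log_div (mul_ne_zero ha hb) (mul_ne_zero hc hd), Real.log_mul ha hb,
    Real.log_mul hc hd]
  ring

lemma log_split3 {a c d : ℝ} (ha : a ≠ 0) (hc : c ≠ 0) (hd : d ≠ 0) :
    Real.log (a / (c * d)) = Real.log a - Real.log c - Real.log d := by
  rw [Real.log_div ha (mul_ne_zero hc hd), Real.log_mul hc hd]
  ring

lemma sum_comm3 {α β γ : Type*} [Fintype α] [Fintype β] [Fintype γ] (f : α → β → γ → ℝ) :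
    ∑ a : α, ∑ b : β, ∑ c : γ, f a b c = ∑ c : γ, ∑ b : β, ∑ a : α, f a b c := by
  calc ∑ a : α, ∑ b : β, ∑ c : γ, f a b c
      = ∑ b : β, ∑ a : α, ∑ c : γ, f a b c := Finset.sum_comm
    _ = ∑ b : β, ∑ c : γ, ∑ a : α, f a b c :=
        Finset.sum_congr rfl fun b _ => Finset.sum_comm
    _ = ∑ c : γ, ∑ b : β, ∑ a : α, f a b c := Finset.sum_comm

end Aux

theorem sufficiency_eq_legacy_of_independence_and_separation {Ω : Type*} [Fintype Ω] {𝒴 𝒜 ℛ : Type*} [Fintype 𝒴] [Fintype 𝒜] [Fintype ℛ]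
    (p : Ω → ℝ) (hp : IsPMF p) (Y : Ω → 𝒴) (A : Ω → 𝒜) (R : Ω → ℛ)
    (hind : mutualInfo p R A = 0) (hsep : condMutualInfo p R A Y = 0) :
    condMutualInfo p Y A R = mutualInfo p A Y ∧
      (mutualInfo p A Y ≠ 0 → condMutualInfo p Y A R ≠ 0) := by
  obtain ⟨hp0, -⟩ := hp
  have hA : condMutualInfo p Y A R =
      ∑ y : 𝒴, ∑ a : 𝒜, ∑ r : ℛ,
        pr p (fun ω => Y ω = y ∧ A ω = a ∧ R ω = r) *
          Real.log ((pr p (fun ω => R ω = r) *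
              pr p (fun ω => Y ω = y ∧ A ω = a ∧ R ω = r)) /
            (pr p (fun ω => Y ω = y ∧ R ω = r) * pr p (fun ω => A ω = a ∧ R ω = r))) := rfl
  have hB : mutualInfo p A Y =
      ∑ y : 𝒴, ∑ a : 𝒜, ∑ r : ℛ,
        pr p (fun ω => Y ω = y ∧ A ω = a ∧ R ω = r) *
          Real.log (pr p (fun ω => A ω = a ∧ Y ω = y) /
            (pr p (fun ω => A ω = a) * pr p (fun ω => Y ω = y))) := by
    unfold mutualInfo
    rw [Finset.sum_comm]
    refine Finset.sum_congr rfl fun y _ => Finset.sum_congr rfl fun a _ => ?_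
    have e4 : (∑ r : ℛ, pr p fun ω => Y ω = y ∧ A ω = a ∧ R ω = r) =
        pr p (fun ω => A ω = a ∧ Y ω = y) := by
      rw [pr_decomp p R (fun ω => A ω = a ∧ Y ω = y)]
      exact Finset.sum_congr rfl fun r _ => pr_congr p (fun ω => by tauto)
    rw [← Finset.sum_mul, e4]
  have hC : condMutualInfo p R A Y =
      ∑ y : 𝒴, ∑ a : 𝒜, ∑ r : ℛ,
        pr p (fun ω => Y ω = y ∧ A ω = a ∧ R ω = r) *
          Real.log ((pr p (fun ω => Y ω = y) *
              pr p (fun ω => Y ω = y ∧ A ω = a ∧ R ω = r)) /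
            (pr p (fun ω => Y ω = y ∧ R ω = r) * pr p (fun ω => A ω = a ∧ Y ω = y))) := by
    unfold condMutualInfo
    refine (sum_comm3 _).trans ?_
    refine Finset.sum_congr rfl fun y _ => Finset.sum_congr rfl fun a _ =>
      Finset.sum_congr rfl fun r _ => ?_
    have e1 : pr p (fun ω => R ω = r ∧ A ω = a ∧ Y ω = y) =
        pr p (fun ω => Y ω = y ∧ A ω = a ∧ R ω = r) := pr_congr p (fun ω => by tauto)
    have e2 : pr p (fun ω => R ω = r ∧ Y ω = y) =
        pr p (fun ω => Y ω = y ∧ R ω = r) := pr_congr p (fun ω => by tauto)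
    rw [e1, e2]
  have hD : mutualInfo p R A =
      ∑ y : 𝒴, ∑ a : 𝒜, ∑ r : ℛ,
        pr p (fun ω => Y ω = y ∧ A ω = a ∧ R ω = r) *
          Real.log (pr p (fun ω => A ω = a ∧ R ω = r) /
            (pr p (fun ω => R ω = r) * pr p (fun ω => A ω = a))) := by
    unfold mutualInfo
    rw [← sum_comm3 (fun r a y =>
      pr p (fun ω => Y ω = y ∧ A ω = a ∧ R ω = r) *
        Real.log (pr p (fun ω => A ω = a ∧ R ω = r) /
          (pr p (fun ω => R ω = r) * pr p (fun ω => A ω = a))))]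
    refine Finset.sum_congr rfl fun r _ => Finset.sum_congr rfl fun a _ => ?_
    have e2 : pr p (fun ω => R ω = r ∧ A ω = a) =
        pr p (fun ω => A ω = a ∧ R ω = r) := pr_congr p (fun ω => by tauto)
    have e4 : (∑ y : 𝒴, pr p fun ω => Y ω = y ∧ A ω = a ∧ R ω = r) =
        pr p (fun ω => A ω = a ∧ R ω = r) := by
      rw [pr_decomp p Y (fun ω => A ω = a ∧ R ω = r)]
      exact Finset.sum_congr rfl fun y _ => pr_congr p (fun ω => by tauto)
    rw [e2, ← Finset.sum_mul, e4]
  have key : condMutualInfo p Y A R - mutualInfo p A Y - condMutualInfo p R A Y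
      + mutualInfo p R A = 0 := by
    rw [hA, hB, hC, hD]
    simp only [← Finset.sum_sub_distrib, ← Finset.sum_add_distrib]
    refine Finset.sum_eq_zero fun y _ => Finset.sum_eq_zero fun a _ =>
      Finset.sum_eq_zero fun r _ => ?_
    by_cases ht : pr p (fun ω => Y ω = y ∧ A ω = a ∧ R ω = r) = 0
    · rw [ht]; ring
    · have hTpos : 0 < pr p (fun ω => Y ω = y ∧ A ω = a ∧ R ω = r) :=
        lt_of_le_of_ne (pr_nonneg hp0 _) (Ne.symm ht)
      have hpy : (0:ℝ) < pr p (fun ω => Y ω = y) :=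
        lt_of_lt_of_le hTpos (pr_mono hp0 (fun ω h => h.1))
      have hpa : (0:ℝ) < pr p (fun ω => A ω = a) :=
        lt_of_lt_of_le hTpos (pr_mono hp0 (fun ω h => h.2.1))
      have hpr : (0:ℝ) < pr p (fun ω => R ω = r) :=
        lt_of_lt_of_le hTpos (pr_mono hp0 (fun ω h => h.2.2))
      have hpyr : (0:ℝ) < pr p (fun ω => Y ω = y ∧ R ω = r) :=
        lt_of_lt_of_le hTpos (pr_mono hp0 (fun ω h => ⟨h.1, h.2.2⟩))
      have hpar : (0:ℝ) < pr p (fun ω => A ω = a ∧ R ω = r) :=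
        lt_of_lt_of_le hTpos (pr_mono hp0 (fun ω h => ⟨h.2.1, h.2.2⟩))
      have hpay : (0:ℝ) < pr p (fun ω => A ω = a ∧ Y ω = y) :=
        lt_of_lt_of_le hTpos (pr_mono hp0 (fun ω h => ⟨h.2.1, h.1⟩))
      rw [log_split4 hpr.ne' ht hpyr.ne' hpar.ne',
        log_split3 hpay.ne' hpa.ne' hpy.ne',
        log_split4 hpy.ne' ht hpyr.ne' hpay.ne',
        log_split3 hpar.ne' hpr.ne' hpa.ne']
      ring
  have main : condMutualInfo p Y A R = mutualInfo p A Y := by linarith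
  exact ⟨main, fun h => by rw [main]; exact h⟩
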